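/- arXiv:1601.08072 — 2 statements merged into one kernel-verified Lean document; each statement's English description precedes it below -/
import Mathlib

section
/- For natural numbers j and k, the integral ∫_{Ω′} |z₁|^{2j} |z₂|^{2k} dV(z₁,z₂) is finite if and only if j = k. -/
/-!
Slicing `X′` over `z₁` gives an annulus of width `2|z₁|⁻³` around the circle of radius `|z₁|⁻¹`,
of area `4π|z₁|⁻⁴`, on which `|z₂| ≈ |z₁|⁻¹`; so the integral over `X′` is comparable to
`∫_{|z₁|>4} |z₁|^{2(j-k)-4} dA`, which is finite iff `j ≤ k`. Slicing `Y′` over `z₂` gives a disc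
of radius `ρ = (2|z₂| log₄|z₂|)⁻¹`, contributing `≈ |z₂|^{2k} ρ^{2j+2}`; so the integral over `Y′`
is comparable to `∫_{|z₂|>4} |z₂|^{2(k-j)-2} (log|z₂|)^{-2j-2} dA`. For `j = k` this is the
convergent `∫ dA / (|z|² log²|z|)`, while for `j < k` it dominates the divergent `∫ |z|⁻² dA`.
These radial integrals over `ℂ` reduce to one-variable integrals in polar coordinates.
-/

open Complex MeasureTheory Metric Set Module
open scoped ENNReal

section Radial

variable {E : Type*} [NormedAddCommGroup E] [NormedSpace ℝ E] [FiniteDimensional ℝ E]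
  [MeasurableSpace E] [BorelSpace E] [Nontrivial E] (μ : Measure E) [μ.IsAddHaarMeasure]

theorem lintegral_compl_closedBall_lt_top_iff {a : ℝ} (ha : 0 ≤ a) {g : ℝ → ℝ}
    (hg : Measurable g) (hg₀ : ∀ r, a < r → 0 ≤ g r) :
    ∫⁻ x in (closedBall (0 : E) a)ᶜ, ENNReal.ofReal (g ‖x‖) ∂μ < ∞ ↔
      IntegrableOn (fun r ↦ r ^ (finrank ℝ E - 1) * g r) (Ioi a) := by
  set G := (Ioi a).indicator g
  have hG : ∫⁻ x in (closedBall (0 : E) a)ᶜ, ENNReal.ofReal (g ‖x‖) ∂μ =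
      ∫⁻ x, ENNReal.ofReal (G ‖x‖) ∂μ := by
    rw [← lintegral_indicator measurableSet_closedBall.compl]
    congr 1 with x
    by_cases hx : a < ‖x‖ <;> simp [G, indicator, hx]
  have hG₀ : ∀ r, 0 ≤ G r := fun r ↦ by
    by_cases hr : a < r
    · simpa [G, hr] using hg₀ r hr
    · simp [G, hr]
  have hGm : Measurable fun x : E ↦ G ‖x‖ := (hg.indicator measurableSet_Ioi).comp measurable_norm
  have hradial := integrable_fun_norm_addHaar μ (f := G)
  rw [Integrable, and_iff_right hGm.aestronglyMeasurable,
    hasFiniteIntegral_iff_ofReal (.of_forall fun x ↦ hG₀ _)] at hradial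
  rw [hG, hradial]
  have hmul : (fun r ↦ r ^ (finrank ℝ E - 1) • G r) =
      (Ioi a).indicator fun r ↦ r ^ (finrank ℝ E - 1) * g r := by
    ext r
    simp [G, indicator_mul_right]
  rw [hmul, IntegrableOn, integrable_indicator_iff measurableSet_Ioi, IntegrableOn,
    Measure.restrict_restrict measurableSet_Ioi, Ioi_inter_Ioi, max_eq_left ha, IntegrableOn]

theorem lintegral_compl_closedBall_norm_rpow_lt_top_iff {a p : ℝ} (ha : 0 < a) :
    ∫⁻ x in (closedBall (0 : E) a)ᶜ, ENNReal.ofReal (‖x‖ ^ p) ∂μ < ∞ ↔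
      p < -finrank ℝ E := by
  rw [lintegral_compl_closedBall_lt_top_iff μ ha.le (by fun_prop)
    (fun r hr ↦ Real.rpow_nonneg (ha.trans hr).le p)]
  have hd : 1 ≤ finrank ℝ E := finrank_pos
  rw [integrableOn_congr_fun (g := fun r ↦ r ^ (p + (finrank ℝ E - 1 : ℕ))) (fun r hr ↦ by
    dsimp only
    rw [Real.rpow_add (ha.trans hr), Real.rpow_natCast, mul_comm]) measurableSet_Ioi,
    integrableOn_Ioi_rpow_iff ha, Nat.cast_sub hd]
  constructor <;> intro h <;> push_cast at * <;> linarith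

theorem lintegral_compl_closedBall_inv_norm_pow_mul_log_sq_lt_top {a : ℝ} (ha : 1 < a) :
    ∫⁻ x in (closedBall (0 : E) a)ᶜ,
      ENNReal.ofReal (1 / (‖x‖ ^ finrank ℝ E * Real.log ‖x‖ ^ 2)) ∂μ < ∞ := by
  rw [lintegral_compl_closedBall_lt_top_iff μ (by linarith)
    (g := fun r ↦ 1 / (r ^ finrank ℝ E * Real.log r ^ 2)) (by fun_prop)
    (fun r hr ↦ one_div_nonneg.2 (mul_nonneg (pow_nonneg (by linarith) _) (sq_nonneg _)))]
  refine (integrableOn_inv_div_log_sq_Ioi ha).congr_fun (fun r hr ↦ ?_) measurableSet_Ioi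
  have hr : 0 < r := by simp at hr; linarith
  obtain ⟨d, hd⟩ := Nat.exists_eq_add_of_le' (finrank_pos : 0 < finrank ℝ E)
  rw [hd, Nat.add_sub_cancel, pow_succ]
  field_simp

end Radial

section Slices

variable {α β : Type*} [MeasurableSpace α] [MeasurableSpace β] {μ : Measure α} {ν : Measure β}
  {S : Set (α × β)} {f : α → ℝ≥0∞} {g : β → ℝ≥0∞}

theorem setLIntegral_prod_mul_eq_setLIntegral_slice_fst [SFinite ν] (hS : MeasurableSet S)
    {T : Set α} (hST : ∀ z ∈ S, z.1 ∈ T) (hf : Measurable f) (hg : Measurable g) :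
    ∫⁻ z in S, f z.1 * g z.2 ∂μ.prod ν = ∫⁻ x in T, f x * ∫⁻ y in Prod.mk x ⁻¹' S, g y ∂ν ∂μ := by
  rw [← lintegral_indicator hS, lintegral_prod _ (by fun_prop), setLIntegral_eq_of_support_subset]
  · congr 1 with x
    rw [← lintegral_const_mul _ hg, ← lintegral_indicator (measurable_prodMk_left hS)]
    congr 1 with y
  intro x hx
  by_contra hxT
  have : Prod.mk x ⁻¹' S = ∅ := eq_empty_of_forall_notMem fun y hy ↦ hxT (hST _ hy)
  simp [this] at hx

theorem setLIntegral_prod_mul_eq_setLIntegral_slice_snd [SFinite μ] [SFinite ν]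
    (hS : MeasurableSet S) {T : Set β} (hST : ∀ z ∈ S, z.2 ∈ T) (hf : Measurable f)
    (hg : Measurable g) :
    ∫⁻ z in S, f z.1 * g z.2 ∂μ.prod ν =
      ∫⁻ y in T, g y * ∫⁻ x in (·, y) ⁻¹' S, f x ∂μ ∂ν := by
  rw [← lintegral_indicator hS, lintegral_prod_symm _ (by fun_prop),
    setLIntegral_eq_of_support_subset]
  · congr 1 with y
    rw [← lintegral_const_mul _ hf, ← lintegral_indicator (measurable_prodMk_right hS)]
    congr 1 with x
    by_cases hx : (x, y) ∈ S <;> simp [indicator, hx, mul_comm]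
  intro y hy
  by_contra hyT
  have : (·, y) ⁻¹' S = ∅ := eq_empty_of_forall_notMem fun x hx ↦ hyT (hST _ hx)
  simp [this] at hy

end Slices

section NormBounds

variable {E : Type*} [SeminormedAddCommGroup E] [MeasurableSpace E] {μ : Measure E} {s : Set E}

theorem setLIntegral_norm_pow_le (hs : MeasurableSet s) {b : ℝ} (hsb : s ⊆ closedBall 0 b)
    (m : ℕ) : ∫⁻ y in s, ENNReal.ofReal (‖y‖ ^ m) ∂μ ≤ ENNReal.ofReal (b ^ m) * μ s := by
  rw [← setLIntegral_const]
  refine setLIntegral_mono' hs fun y hy ↦ ENNReal.ofReal_le_ofReal ?_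
  exact pow_le_pow_left₀ (norm_nonneg y) (mem_closedBall_zero_iff.mp (hsb hy)) m

theorem le_setLIntegral_norm_pow (hs : MeasurableSet s) {a : ℝ} (ha : 0 ≤ a)
    (has : s ⊆ (ball 0 a)ᶜ) (m : ℕ) :
    ENNReal.ofReal (a ^ m) * μ s ≤ ∫⁻ y in s, ENNReal.ofReal (‖y‖ ^ m) ∂μ := by
  rw [← setLIntegral_const]
  refine setLIntegral_mono' hs fun y hy ↦ ENNReal.ofReal_le_ofReal ?_
  have := has hy
  simp only [mem_compl_iff, mem_ball_zero_iff, not_lt] at this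
  exact pow_le_pow_left₀ ha this m

end NormBounds

theorem Complex.volume_ball_eq_ofReal (a : ℂ) {r : ℝ} (hr : 0 ≤ r) :
    volume (ball a r) = ENNReal.ofReal (Real.pi * r ^ 2) := by
  rw [Complex.volume_ball, ← ENNReal.ofReal_pow hr, ← ENNReal.ofReal_coe_nnreal,
    NNReal.coe_real_pi, ← ENNReal.ofReal_mul (by positivity), mul_comm]

theorem Complex.volume_ball_diff_closedBall (c : ℂ) {a b : ℝ} (ha : 0 ≤ a) (hab : a < b) :
    volume (ball c b \ closedBall c a) = ENNReal.ofReal (Real.pi * (b ^ 2 - a ^ 2)) := by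
  rw [measure_sdiff (closedBall_subset_ball hab) measurableSet_closedBall.nullMeasurableSet
    measure_closedBall_lt_top.ne, Measure.addHaar_closedBall_eq_addHaar_ball,
    volume_ball_eq_ofReal c (ha.trans hab.le), volume_ball_eq_ofReal c ha,
    ← ENNReal.ofReal_sub _ (by positivity), mul_sub]

theorem Complex.lintegral_compl_closedBall_norm_rpow_neg_two {a : ℝ} (ha : 0 < a) :
    ∫⁻ x in (closedBall (0 : ℂ) a)ᶜ, ENNReal.ofReal (‖x‖ ^ (-2 : ℝ)) = ∞ := by
  rw [← not_lt_top_iff, lintegral_compl_closedBall_norm_rpow_lt_top_iff volume ha,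
    Complex.finrank_real_complex]
  norm_num

theorem Real.two_mul_log_pow_le {s : ℝ} (hs : 1 ≤ s) {m : ℕ} (hm : 0 < m) :
    (2 * Real.log s) ^ m ≤ m ^ m * s ^ 2 := by
  have hlog := Real.log_le_rpow_div (by linarith : 0 ≤ s) (by positivity : (0 : ℝ) < 2 / m)
  calc (2 * Real.log s) ^ m ≤ (m * s ^ (2 / m : ℝ)) ^ m := by
        refine pow_le_pow_left₀ (by linarith [Real.log_nonneg hs]) ?_ m
        calc 2 * Real.log s ≤ 2 * (s ^ (2 / m : ℝ) / (2 / m)) := by gcongr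
          _ = m * s ^ (2 / m : ℝ) := by field_simp
    _ = m ^ m * s ^ 2 := by
        rw [mul_pow, ← Real.rpow_mul_natCast (by linarith), div_mul_cancel₀ _ (by positivity),
          Real.rpow_two]

namespace OmegaPrime

def X : Set (ℂ × ℂ) := {z | 4 < ‖z.1‖ ∧ |‖z.2‖ - 1 / ‖z.1‖| < 1 / ‖z.1‖ ^ 3}

def Y : Set (ℂ × ℂ) :=
  {z | 4 < ‖z.2‖ ∧ ‖z.1‖ < 1 / (2 * ‖z.2‖ * (Real.log ‖z.2‖ / Real.log 4))}

def Z : Set (ℂ × ℂ) := {z | ‖z.1‖ ≤ 4 ∧ ‖z.2‖ ≤ 4}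

theorem measurableSet_X : MeasurableSet X := by
  rw [X, ofPred_and]
  exact (measurableSet_lt (by fun_prop) (by fun_prop)).inter
    (measurableSet_lt (by fun_prop) (by fun_prop))

theorem measurableSet_Y : MeasurableSet Y := by
  rw [Y, ofPred_and]
  exact (measurableSet_lt (by fun_prop) (by fun_prop)).inter
    (measurableSet_lt (by fun_prop) (by fun_prop))

theorem Z_eq : Z = closedBall 0 4 ×ˢ closedBall 0 4 := by
  ext z
  simp [Z]

theorem preimage_mk_X {x : ℂ} (hx : 4 < ‖x‖) :
    Prod.mk x ⁻¹' X =
      ball 0 ((1 + 1 / ‖x‖ ^ 2) / ‖x‖) \ closedBall 0 ((1 - 1 / ‖x‖ ^ 2) / ‖x‖) := by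
  ext y
  simp only [X, mem_preimage, mem_ofPred_eq, hx, true_and, abs_sub_lt_iff, mem_sdiff,
    mem_ball_zero_iff, mem_closedBall_zero_iff, not_le, add_div, sub_div, div_div, ← pow_succ]
  constructor <;> rintro ⟨h₁, h₂⟩ <;> constructor <;> linarith

theorem measurableSet_preimage_mk_X (x : ℂ) : MeasurableSet (Prod.mk x ⁻¹' X) :=
  measurable_prodMk_left measurableSet_X

theorem volume_preimage_mk_X {x : ℂ} (hx : 4 < ‖x‖) :
    volume (Prod.mk x ⁻¹' X) = ENNReal.ofReal (4 * Real.pi / ‖x‖ ^ 4) := by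
  have hx₀ : 0 < ‖x‖ := by linarith
  have hε : 1 / ‖x‖ ^ 2 < 1 := by rw [div_lt_one (by positivity)]; nlinarith
  rw [preimage_mk_X hx, Complex.volume_ball_diff_closedBall 0
    (div_nonneg (by linarith) hx₀.le) (by gcongr; linarith [(by positivity : 0 < 1 / ‖x‖ ^ 2)])]
  congr 1
  field_simp
  ring

theorem setLIntegral_preimage_mk_X_le (k : ℕ) {x : ℂ} (hx : 4 < ‖x‖) :
    ENNReal.ofReal (‖x‖ ^ (2 * k)) * ∫⁻ y in Prod.mk x ⁻¹' X, ENNReal.ofReal (‖y‖ ^ (2 * k)) ≤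
      ENNReal.ofReal (4 ^ k * (4 * Real.pi)) * ENNReal.ofReal (‖x‖ ^ (-4 : ℝ)) := by
  have hvol := volume_preimage_mk_X hx
  set r := ‖x‖
  have hr : 0 < r := by linarith
  have hrb : r * ((1 + 1 / r ^ 2) / r) ≤ 2 := by
    rw [mul_div_cancel₀ _ hr.ne']
    linarith [(div_le_one (by positivity)).2 (by nlinarith : (1 : ℝ) ≤ r ^ 2)]
  rw [← ENNReal.ofReal_mul (by positivity)]
  calc _ ≤ ENNReal.ofReal (r ^ (2 * k)) *
        (ENNReal.ofReal (((1 + 1 / r ^ 2) / r) ^ (2 * k)) * volume (Prod.mk x ⁻¹' X)) := by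
        gcongr
        refine setLIntegral_norm_pow_le (measurableSet_preimage_mk_X x) ?_ _
        exact (preimage_mk_X hx).trans_subset (sdiff_subset.trans ball_subset_closedBall)
    _ = ENNReal.ofReal ((r * ((1 + 1 / r ^ 2) / r)) ^ (2 * k) * (4 * Real.pi) * r ^ (-4 : ℝ)) := by
        rw [hvol, ← ENNReal.ofReal_mul (by positivity),
          ← ENNReal.ofReal_mul (by positivity), Real.rpow_neg hr.le, mul_pow]
        norm_cast
        ring_nf
    _ ≤ _ := by
        gcongr
        calc (r * ((1 + 1 / r ^ 2) / r)) ^ (2 * k) ≤ 2 ^ (2 * k) := by gcongr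
          _ = 4 ^ k := by rw [pow_mul]; norm_num

theorem le_setLIntegral_preimage_mk_X {j k : ℕ} (hkj : k < j) {x : ℂ} (hx : 4 < ‖x‖) :
    ENNReal.ofReal ((15 / 16) ^ (2 * k) * (4 * Real.pi)) * ENNReal.ofReal (‖x‖ ^ (-2 : ℝ)) ≤
      ENNReal.ofReal (‖x‖ ^ (2 * j)) *
        ∫⁻ y in Prod.mk x ⁻¹' X, ENNReal.ofReal (‖y‖ ^ (2 * k)) := by
  have hvol := volume_preimage_mk_X hx
  set r := ‖x‖
  have hr : 0 < r := by linarith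
  have hra : 15 / 16 ≤ r * ((1 - 1 / r ^ 2) / r) := by
    rw [mul_div_cancel₀ _ hr.ne']
    linarith [(div_le_div_iff₀ (by positivity) (by norm_num)).2 (by nlinarith : 1 * 16 ≤ 1 * r ^ 2)]
  have ha : 0 ≤ (1 - 1 / r ^ 2) / r := by
    rw [← mul_le_mul_iff_of_pos_left hr, mul_zero]; linarith
  rw [← ENNReal.ofReal_mul (by positivity)]
  calc _ ≤ ENNReal.ofReal
        ((r * ((1 - 1 / r ^ 2) / r)) ^ (2 * k) * (4 * Real.pi) * r ^ (-2 : ℝ)) := by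
        gcongr
    _ = ENNReal.ofReal (r ^ (2 * k + 2)) *
        (ENNReal.ofReal (((1 - 1 / r ^ 2) / r) ^ (2 * k)) * volume (Prod.mk x ⁻¹' X)) := by
        rw [hvol, ← ENNReal.ofReal_mul (by positivity),
          ← ENNReal.ofReal_mul (by positivity), Real.rpow_neg hr.le, mul_pow]
        norm_cast
        congr 1
        field_simp
        ring
    _ ≤ _ := by
        refine mul_le_mul' (ENNReal.ofReal_le_ofReal (pow_le_pow_right₀ (by linarith) (by omega)))
          (le_setLIntegral_norm_pow (measurableSet_preimage_mk_X x) ha ?_ _)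
        exact (preimage_mk_X hx).trans_subset
          ((sdiff_subset_compl _ _).trans (compl_subset_compl.2 ball_subset_closedBall))

noncomputable def yRadius (s : ℝ) : ℝ := 1 / (2 * s * (Real.log s / Real.log 4))

theorem preimage_mk_Y {y : ℂ} (hy : 4 < ‖y‖) : (·, y) ⁻¹' Y = ball 0 (yRadius ‖y‖) := by
  ext x
  simp [Y, yRadius, hy]

theorem mul_yRadius {s : ℝ} (hs : 4 < s) : s * yRadius s = Real.log 4 / (2 * Real.log s) := by
  have : 0 < Real.log s := Real.log_pos (by linarith)
  rw [yRadius]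
  field_simp

theorem yRadius_pos {s : ℝ} (hs : 4 < s) : 0 < yRadius s := by
  have : 0 < Real.log s := Real.log_pos (by linarith)
  rw [yRadius]
  have : 0 < s := by linarith
  positivity

theorem setLIntegral_preimage_mk_Y_le (k : ℕ) {y : ℂ} (hy : 4 < ‖y‖) :
    ENNReal.ofReal (‖y‖ ^ (2 * k)) * ∫⁻ x in (·, y) ⁻¹' Y, ENNReal.ofReal (‖x‖ ^ (2 * k)) ≤
      ENNReal.ofReal (Real.pi * Real.log 4 ^ 2 / 4) *
        ENNReal.ofReal (1 / (‖y‖ ^ 2 * Real.log ‖y‖ ^ 2)) := by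
  rw [preimage_mk_Y hy]
  have hρ := yRadius_pos hy
  have hsρ := mul_yRadius hy
  set s := ‖y‖
  set ρ := yRadius s
  have hlog : 0 < Real.log s := Real.log_pos (by linarith)
  have hlog4 : Real.log 4 < Real.log s := Real.log_lt_log (by norm_num) hy
  rw [← ENNReal.ofReal_mul (by positivity)]
  calc _ ≤ ENNReal.ofReal (s ^ (2 * k)) *
        (ENNReal.ofReal (ρ ^ (2 * k)) * volume (ball (0 : ℂ) ρ)) := by
        gcongr
        exact setLIntegral_norm_pow_le measurableSet_ball ball_subset_closedBall _
    _ = ENNReal.ofReal ((s * ρ) ^ (2 * k) * (Real.pi * ρ ^ 2)) := by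
        rw [Complex.volume_ball_eq_ofReal 0 hρ.le, ← ENNReal.ofReal_mul (by positivity),
          ← ENNReal.ofReal_mul (by positivity), mul_pow, mul_assoc]
    _ ≤ ENNReal.ofReal (1 * (Real.pi * ρ ^ 2)) := by
        gcongr
        refine pow_le_one₀ (by positivity) ?_
        rw [hsρ, div_le_one (by positivity)]
        linarith [Real.log_pos (by norm_num : (1 : ℝ) < 4)]
    _ = _ := by
        congr 1
        have : ρ = Real.log 4 / (2 * Real.log s) / s := by rw [← hsρ]; field_simp
        rw [this]
        field_simp
        ring

theorem exists_le_setLIntegral_preimage_mk_Y {j k : ℕ} (hjk : j < k) :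
    ∃ c > 0, ∀ y : ℂ, 4 < ‖y‖ → ENNReal.ofReal c * ENNReal.ofReal (‖y‖ ^ (-2 : ℝ)) ≤
      ENNReal.ofReal (‖y‖ ^ (2 * k)) * ∫⁻ x in (·, y) ⁻¹' Y, ENNReal.ofReal (‖x‖ ^ (2 * j)) := by
  set m := 2 * j + 2
  refine ⟨3 * Real.pi / 4 / 4 ^ j * (Real.log 4 / m) ^ m, by positivity, fun y hy ↦ ?_⟩
  rw [preimage_mk_Y hy]
  have hρ := yRadius_pos hy
  have hsρ := mul_yRadius hy
  set s := ‖y‖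
  set ρ := yRadius s
  have hs : 0 < s := by linarith
  have hlog : 0 < Real.log s := Real.log_pos (by linarith)
  -- Only the outer half `ρ / 2 < ‖x‖ < ρ` of the slice is used, and `s ^ (2 * k) ≥ s ^ m`;
  -- then `(s * ρ) ^ m = (log 4 / (2 * log s)) ^ m ≥ (log 4 / m) ^ m * s⁻²`.
  rw [← ENNReal.ofReal_mul (by positivity)]
  calc _ ≤ ENNReal.ofReal (3 * Real.pi / 4 / 4 ^ j * (s * ρ) ^ m) := by
        gcongr ENNReal.ofReal (?_)
        rw [mul_assoc]
        gcongr
        rw [hsρ, Real.rpow_neg hs.le, div_pow, div_pow, ← div_eq_mul_inv, div_div]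
        gcongr
        exact_mod_cast Real.two_mul_log_pow_le (by linarith) (by omega)
    _ = ENNReal.ofReal (s ^ m) * (ENNReal.ofReal ((ρ / 2) ^ (2 * j)) *
          volume (ball (0 : ℂ) ρ \ closedBall 0 (ρ / 2))) := by
        rw [Complex.volume_ball_diff_closedBall 0 (by positivity) (by linarith),
          ← ENNReal.ofReal_mul (by positivity), ← ENNReal.ofReal_mul (by positivity)]
        congr 1
        rw [show (4 : ℝ) ^ j = 2 ^ (2 * j) by rw [pow_mul]; norm_num]
        simp only [m, div_pow]
        field_simp
        ring
    _ ≤ _ := by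
        refine mul_le_mul' (ENNReal.ofReal_le_ofReal (pow_le_pow_right₀ (by linarith) (by omega)))
          ?_
        refine (le_setLIntegral_norm_pow (measurableSet_ball.diff measurableSet_closedBall)
          (by positivity) ?_ _).trans (lintegral_mono_set sdiff_subset)
        exact (sdiff_subset_compl _ _).trans (compl_subset_compl.2 ball_subset_closedBall)

theorem lintegral_X_eq (j k : ℕ) :
    ∫⁻ z in X, ENNReal.ofReal (‖z.1‖ ^ (2 * j) * ‖z.2‖ ^ (2 * k)) =
      ∫⁻ x in (closedBall 0 4)ᶜ, ENNReal.ofReal (‖x‖ ^ (2 * j)) *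
        ∫⁻ y in Prod.mk x ⁻¹' X, ENNReal.ofReal (‖y‖ ^ (2 * k)) := by
  simp_rw [ENNReal.ofReal_mul (pow_nonneg (norm_nonneg _) _)]
  rw [Measure.volume_eq_prod]
  exact setLIntegral_prod_mul_eq_setLIntegral_slice_fst
    (f := fun x : ℂ ↦ ENNReal.ofReal (‖x‖ ^ (2 * j)))
    (g := fun y : ℂ ↦ ENNReal.ofReal (‖y‖ ^ (2 * k))) measurableSet_X
    (fun z hz ↦ by simpa using hz.1) (by fun_prop) (by fun_prop)

theorem lintegral_Y_eq (j k : ℕ) :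
    ∫⁻ z in Y, ENNReal.ofReal (‖z.1‖ ^ (2 * j) * ‖z.2‖ ^ (2 * k)) =
      ∫⁻ y in (closedBall 0 4)ᶜ, ENNReal.ofReal (‖y‖ ^ (2 * k)) *
        ∫⁻ x in (·, y) ⁻¹' Y, ENNReal.ofReal (‖x‖ ^ (2 * j)) := by
  simp_rw [ENNReal.ofReal_mul (pow_nonneg (norm_nonneg _) _)]
  rw [Measure.volume_eq_prod]
  exact setLIntegral_prod_mul_eq_setLIntegral_slice_snd
    (f := fun x : ℂ ↦ ENNReal.ofReal (‖x‖ ^ (2 * j)))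
    (g := fun y : ℂ ↦ ENNReal.ofReal (‖y‖ ^ (2 * k))) measurableSet_Y
    (fun z hz ↦ by simpa using hz.1) (by fun_prop) (by fun_prop)

theorem lintegral_X_lt_top (k : ℕ) :
    ∫⁻ z in X, ENNReal.ofReal (‖z.1‖ ^ (2 * k) * ‖z.2‖ ^ (2 * k)) < ∞ := by
  rw [lintegral_X_eq]
  refine (setLIntegral_mono' measurableSet_closedBall.compl fun x hx ↦
    setLIntegral_preimage_mk_X_le k (by simpa using hx)).trans_lt ?_
  rw [lintegral_const_mul' _ _ ENNReal.ofReal_ne_top]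
  refine ENNReal.mul_lt_top ENNReal.ofReal_lt_top
    ((lintegral_compl_closedBall_norm_rpow_lt_top_iff volume (by norm_num)).2 ?_)
  norm_num [Complex.finrank_real_complex]

theorem lintegral_Y_lt_top (k : ℕ) :
    ∫⁻ z in Y, ENNReal.ofReal (‖z.1‖ ^ (2 * k) * ‖z.2‖ ^ (2 * k)) < ∞ := by
  rw [lintegral_Y_eq]
  refine (setLIntegral_mono' measurableSet_closedBall.compl fun y hy ↦
    setLIntegral_preimage_mk_Y_le k (by simpa using hy)).trans_lt ?_
  rw [lintegral_const_mul' _ _ ENNReal.ofReal_ne_top]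
  refine ENNReal.mul_lt_top ENNReal.ofReal_lt_top ?_
  simpa [Complex.finrank_real_complex] using
    lintegral_compl_closedBall_inv_norm_pow_mul_log_sq_lt_top (volume : Measure ℂ)
      (by norm_num : (1 : ℝ) < 4)

theorem lintegral_X_eq_top {j k : ℕ} (hkj : k < j) :
    ∫⁻ z in X, ENNReal.ofReal (‖z.1‖ ^ (2 * j) * ‖z.2‖ ^ (2 * k)) = ∞ := by
  rw [lintegral_X_eq, eq_top_iff]
  refine le_trans ?_ (setLIntegral_mono' measurableSet_closedBall.compl fun x hx ↦
    le_setLIntegral_preimage_mk_X hkj (by simpa using hx))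
  rw [lintegral_const_mul' _ _ ENNReal.ofReal_ne_top,
    Complex.lintegral_compl_closedBall_norm_rpow_neg_two (by norm_num), ENNReal.mul_top]
  exact (ENNReal.ofReal_pos.2 (by positivity)).ne'

theorem lintegral_Y_eq_top {j k : ℕ} (hjk : j < k) :
    ∫⁻ z in Y, ENNReal.ofReal (‖z.1‖ ^ (2 * j) * ‖z.2‖ ^ (2 * k)) = ∞ := by
  obtain ⟨c, hc, hle⟩ := exists_le_setLIntegral_preimage_mk_Y hjk
  rw [lintegral_Y_eq, eq_top_iff]
  refine le_trans ?_ (setLIntegral_mono' measurableSet_closedBall.compl fun y hy ↦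
    hle y (by simpa using hy))
  rw [lintegral_const_mul' _ _ ENNReal.ofReal_ne_top,
    Complex.lintegral_compl_closedBall_norm_rpow_neg_two (by norm_num), ENNReal.mul_top]
  exact (ENNReal.ofReal_pos.2 hc).ne'

theorem lintegral_Z_lt_top (j k : ℕ) :
    ∫⁻ z in Z, ENNReal.ofReal (‖z.1‖ ^ (2 * j) * ‖z.2‖ ^ (2 * k)) < ∞ := by
  rw [Z_eq]
  exact (Continuous.continuousOn (by fun_prop)).integrableOn_compact
    (isCompact_closedBall 0 4 |>.prod (isCompact_closedBall 0 4)) |>.lintegral_lt_top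

end OmegaPrime

open OmegaPrime in
/-- The monomial integral `∫_{Ω′} |z₁|^{2j} |z₂|^{2k} dV` is finite iff `j = k`. -/
theorem stmt_6 (X' Y' Z Ω' : Set (ℂ × ℂ))
    (hX' : X' = {z : ℂ × ℂ | 4 < ‖z.1‖ ∧
      |‖z.2‖ - 1 / ‖z.1‖| < 1 / (‖z.1‖) ^ 3})
    (hY' : Y' = {z : ℂ × ℂ | 4 < ‖z.2‖ ∧
      ‖z.1‖ < 1 / (2 * ‖z.2‖ * (Real.log (‖z.2‖) / Real.log 4))})
    (hZ : Z = {z : ℂ × ℂ | ‖z.1‖ ≤ 4 ∧ ‖z.2‖ ≤ 4})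
    (hΩ' : Ω' = X' ∪ Y' ∪ Z) (j k : ℕ) :
    (∫⁻ z in Ω', ENNReal.ofReal (‖z.1‖ ^ (2 * j) * ‖z.2‖ ^ (2 * k))) < ⊤ ↔
      j = k := by
  subst hX' hY' hZ hΩ'
  change ∫⁻ z in X ∪ Y ∪ OmegaPrime.Z, _ < ∞ ↔ j = k
  rcases lt_trichotomy j k with hjk | rfl | hkj
  · refine iff_of_false (fun h ↦ h.ne (top_le_iff.1 ?_)) hjk.ne
    exact (lintegral_Y_eq_top hjk).symm.le.trans
      (lintegral_mono_set (subset_union_right.trans subset_union_left))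
  · refine iff_of_true ?_ rfl
    refine (lintegral_union_le _ _ _).trans_lt (ENNReal.add_lt_top.2 ⟨?_, lintegral_Z_lt_top j j⟩)
    exact (lintegral_union_le _ _ _).trans_lt
      (ENNReal.add_lt_top.2 ⟨lintegral_X_lt_top j, lintegral_Y_lt_top j⟩)
  · refine iff_of_false (fun h ↦ h.ne (top_le_iff.1 ?_)) hkj.ne'
    exact (lintegral_X_eq_top hkj).symm.le.trans
      (lintegral_mono_set (subset_union_left.trans subset_union_left))
end

section
/- The series Σ_{k=1}^∞ ( c_{k+1}²/c_k² − c_k²/c_{k−1}² ) converges (the sequence of these nonnegative terms is summable), where c_k² = ∫_Ω |z₁z₂|^{2k} dV. -/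
/-!
Write `G z = |z₁ z₂|` and `μ` for Lebesgue measure on `Ω`, so that `c_k² = ∫ G^(2k) dμ`. By
Cauchy–Schwarz, `(∫ G^(2k+2))² ≤ ∫ G^(2k) · ∫ G^(2k+4)`, so the ratios `c_{k+1}²/c_k²` increase,
and they stay below `sup_Ω G² ≤ 16²`; a monotone bounded sequence has summable increments. This
needs `Ω` to have finite volume and `G` to be nonzero on a set of positive measure (a small bidisc
in `Z`). The unbounded parts have finite volume: `X` lies in the union of the bidiscs
`|z₁| < 4^(m+1), |z₂| < 1/(2·4^m·m)`, of volume `(2π/m)²`, and the fibre of `Y` over `z₂` is an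
annulus of area `4π/|z₂|⁴`, which is integrable on `|z₂| > 4`.
-/

open MeasureTheory Metric Function Filter Real

theorem summable_sub_of_monotone_of_le {a : ℕ → ℝ} {C : ℝ} (ha : Monotone a) (hC : ∀ k, a k ≤ C) :
    Summable (fun k => a (k + 1) - a k) :=
  summable_of_sum_range_le (c := C - a 0) (fun k => sub_nonneg.2 (ha k.le_succ))
    (fun n => by rw [Finset.sum_range_sub]; linarith [hC n])

section EvenMoments

variable {α : Type*} [MeasurableSpace α] {μ : Measure α}

theorem sq_integral_mul_le_integral_sq_mul_integral_sq {f g : α → ℝ}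
    (hf : Integrable (fun x => f x ^ 2) μ) (hg : Integrable (fun x => g x ^ 2) μ)
    (hfg : Integrable (fun x => f x * g x) μ) :
    (∫ x, f x * g x ∂μ) ^ 2 ≤ (∫ x, f x ^ 2 ∂μ) * ∫ x, g x ^ 2 ∂μ := by
  have hquad : ∀ t : ℝ, 0 ≤ (∫ x, f x ^ 2 ∂μ) * (t * t) + (-2 * ∫ x, f x * g x ∂μ) * t
      + ∫ x, g x ^ 2 ∂μ := by
    intro t
    have hexpand : ∫ x, (t * f x - g x) ^ 2 ∂μ = (∫ x, f x ^ 2 ∂μ) * (t * t)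
        + (-2 * ∫ x, f x * g x ∂μ) * t + ∫ x, g x ^ 2 ∂μ := by
      simp_rw [show ∀ x, (t * f x - g x) ^ 2
          = t ^ 2 * f x ^ 2 - 2 * t * (f x * g x) + g x ^ 2 from fun x => by ring]
      have hint : Integrable (fun x => t ^ 2 * f x ^ 2 - 2 * t * (f x * g x)) μ :=
        (hf.const_mul _).sub (hfg.const_mul _)
      rw [integral_add hint hg, integral_sub (hf.const_mul _) (hfg.const_mul _),
        integral_const_mul, integral_const_mul]
      ring
    exact hexpand ▸ integral_nonneg fun x => sq_nonneg _
  have hdisc := discrim_le_zero hquad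
  rw [discrim] at hdisc
  nlinarith

variable [IsFiniteMeasure μ] {f : α → ℝ} {C : ℝ}

theorem integrable_pow_of_ae_abs_le (hf : AEStronglyMeasurable f μ)
    (hC : ∀ᵐ x ∂μ, |f x| ≤ C) (n : ℕ) : Integrable (fun x => f x ^ n) μ :=
  .of_bound (hf.pow n) (C ^ n) <| hC.mono fun x hx => by
    rw [Real.norm_eq_abs, abs_pow]
    exact pow_le_pow_left₀ (abs_nonneg _) hx n

variable (hf : AEStronglyMeasurable f μ) (hC : ∀ᵐ x ∂μ, |f x| ≤ C)
include hf hC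

theorem sq_integral_pow_two_mul_succ_le (k : ℕ) :
    (∫ x, f x ^ (2 * (k + 1)) ∂μ) ^ 2 ≤
      (∫ x, f x ^ (2 * k) ∂μ) * ∫ x, f x ^ (2 * (k + 2)) ∂μ := by
  have hint := integrable_pow_of_ae_abs_le hf hC
  simpa only [← pow_mul, ← pow_add, mul_comm _ 2, show k + (k + 2) = 2 * (k + 1) by ring]
    using sq_integral_mul_le_integral_sq_mul_integral_sq (μ := μ) (f := fun x => f x ^ k)
      (g := fun x => f x ^ (k + 2)) (by simpa only [← pow_mul] using hint _)
      (by simpa only [← pow_mul] using hint _) (by simpa only [← pow_add] using hint _)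

theorem integral_pow_two_mul_succ_le (k : ℕ) :
    ∫ x, f x ^ (2 * (k + 1)) ∂μ ≤ C ^ 2 * ∫ x, f x ^ (2 * k) ∂μ := by
  have hint := integrable_pow_of_ae_abs_le hf hC
  rw [← integral_const_mul]
  refine integral_mono_ae (hint _) ((hint _).const_mul _) (hC.mono fun x hx => ?_)
  dsimp only
  rw [mul_add, mul_one, pow_add, mul_comm]
  have hsq : f x ^ 2 ≤ C ^ 2 := by simpa only [sq_abs] using pow_le_pow_left₀ (abs_nonneg _) hx 2
  exact mul_le_mul_of_nonneg_right hsq ((even_two_mul k).pow_nonneg _)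

theorem integral_pow_two_mul_pos (hsupp : 0 < μ (support f)) (k : ℕ) :
    0 < ∫ x, f x ^ (2 * k) ∂μ := by
  refine (integral_pos_iff_support_of_nonneg_ae
    (Eventually.of_forall fun x => (even_two_mul k).pow_nonneg _)
    (integrable_pow_of_ae_abs_le hf hC _)).2 (hsupp.trans_le (measure_mono fun x hx => ?_))
  exact pow_ne_zero _ hx

theorem summable_ratio_integral_pow_two_mul_sub (hsupp : 0 < μ (support f)) :
    Summable fun k : ℕ => (∫ x, f x ^ (2 * (k + 2)) ∂μ) / ∫ x, f x ^ (2 * (k + 1)) ∂μ -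
      (∫ x, f x ^ (2 * (k + 1)) ∂μ) / ∫ x, f x ^ (2 * k) ∂μ := by
  have hpos := integral_pow_two_mul_pos hf hC hsupp
  have hmono : Monotone fun k => (∫ x, f x ^ (2 * (k + 1)) ∂μ) / ∫ x, f x ^ (2 * k) ∂μ :=
    monotone_nat_of_le_succ fun k => by
      rw [div_le_div_iff₀ (hpos k) (hpos (k + 1)), ← sq]
      exact (sq_integral_pow_two_mul_succ_le hf hC k).trans_eq (mul_comm _ _)
  have hbdd : ∀ k, (∫ x, f x ^ (2 * (k + 1)) ∂μ) / ∫ x, f x ^ (2 * k) ∂μ ≤ C ^ 2 :=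
    fun k => (div_le_iff₀ (hpos k)).2 (integral_pow_two_mul_succ_le hf hC k)
  exact (summable_sub_of_monotone_of_le hmono hbdd :)

end EvenMoments

theorem measure_lt_top_of_subset_iUnion {α : Type*} [MeasurableSpace α] {μ : Measure α}
    {s : Set α} {T : ℕ → Set α} {b : ℕ → ℝ} (hs : s ⊆ ⋃ n, T n)
    (hT : ∀ n, μ (T n) ≤ ENNReal.ofReal (b n)) (hb : Summable b) : μ s < ⊤ :=
  calc μ s ≤ ∑' n, μ (T n) := (measure_mono hs).trans (measure_iUnion_le T)
    _ ≤ ∑' n, ENNReal.ofReal (b n) := ENNReal.tsum_le_tsum hT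
    _ < ⊤ := (ENNReal.tsum_coe_ne_top_iff_summable.2 hb.toNNReal).lt_top

theorem ENNReal.coe_nnreal_pi : ((NNReal.pi : NNReal) : ENNReal) = ENNReal.ofReal π := by
  rw [← ENNReal.ofReal_coe_nnreal, NNReal.coe_real_pi]

theorem volume_ball_prod_ball (a b : ℂ) {R ρ : ℝ} (hR : 0 ≤ R) (hρ : 0 ≤ ρ) :
    volume (ball a R ×ˢ ball b ρ) = ENNReal.ofReal ((π * R * ρ) ^ 2) := by
  rw [Measure.volume_eq_prod, Measure.prod_prod, Complex.volume_ball, Complex.volume_ball,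
    ENNReal.coe_nnreal_pi, ← ENNReal.ofReal_pow hR, ← ENNReal.ofReal_pow hρ,
    ← ENNReal.ofReal_mul (by positivity), ← ENNReal.ofReal_mul (by positivity),
    ← ENNReal.ofReal_mul (by positivity)]
  ring_nf

theorem volume_setOf_abs_norm_sub_lt_le {a δ : ℝ} (hδ : 0 < δ) (hδa : δ ≤ a) :
    volume {x : ℂ | |‖x‖ - a| < δ} ≤ ENNReal.ofReal (4 * π * a * δ) := by
  have hsub : {x : ℂ | |‖x‖ - a| < δ} ⊆ ball 0 (a + δ) \ closedBall 0 (a - δ) := fun x hx => by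
    obtain ⟨hlow, hup⟩ := abs_lt.1 (show |‖x‖ - a| < δ from hx)
    exact ⟨mem_ball_zero_iff.2 (by linarith), fun h => by linarith [mem_closedBall_zero_iff.1 h]⟩
  refine (measure_mono hsub).trans ((measure_sdiff_le_iff_le_add
    measurableSet_closedBall.nullMeasurableSet (closedBall_subset_ball (by linarith))
    measure_closedBall_lt_top.ne).2 ?_)
  have ha : 0 < a := hδ.trans_le hδa
  rw [Complex.volume_ball, Complex.volume_closedBall, ENNReal.coe_nnreal_pi,
    ← ENNReal.ofReal_pow (by linarith), ← ENNReal.ofReal_pow (by linarith),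
    ← ENNReal.ofReal_mul (by positivity), ← ENNReal.ofReal_mul (by nlinarith),
    ← ENNReal.ofReal_add (by nlinarith [pi_pos]) (by positivity)]
  exact ENNReal.ofReal_le_ofReal (le_of_eq (by ring))

def tubeX : Set (ℂ × ℂ) :=
  {z | 4 < ‖z.1‖ ∧ ‖z.2‖ < 1 / (2 * ‖z.1‖ * (Real.log ‖z.1‖ / Real.log 4))}

def shellY : Set (ℂ × ℂ) := {z | 4 < ‖z.2‖ ∧ |‖z.1‖ - 1 / ‖z.2‖| < 1 / ‖z.2‖ ^ 3}

def polydiscZ : Set (ℂ × ℂ) := {z | ‖z.1‖ ≤ 4 ∧ ‖z.2‖ ≤ 4}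

theorem measurableSet_tubeX : MeasurableSet tubeX := by
  unfold tubeX
  measurability

theorem measurableSet_shellY : MeasurableSet shellY := by
  unfold shellY
  measurability

theorem measurableSet_polydiscZ : MeasurableSet polydiscZ := by
  unfold polydiscZ
  measurability

theorem norm_mul_lt_one_of_mem_tubeX {z : ℂ × ℂ} (hz : z ∈ tubeX) : ‖z.1 * z.2‖ < 1 := by
  obtain ⟨h4, h2⟩ := hz
  rw [Real.log_div_log] at h2
  have hL : 1 < logb 4 ‖z.1‖ :=
    (logb_self_eq_one (by norm_num)).symm.trans_lt (logb_lt_logb (by norm_num) (by norm_num) h4)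
  have ht : 0 < ‖z.1‖ := by linarith
  calc ‖z.1 * z.2‖ = ‖z.1‖ * ‖z.2‖ := norm_mul _ _
    _ < ‖z.1‖ * (1 / (2 * ‖z.1‖ * logb 4 ‖z.1‖)) := mul_lt_mul_of_pos_left h2 ht
    _ = 1 / (2 * logb 4 ‖z.1‖) := by field_simp
    _ < 1 := by rw [div_lt_one (by linarith)]; linarith

theorem norm_mul_lt_two_of_mem_shellY {z : ℂ × ℂ} (hz : z ∈ shellY) : ‖z.1 * z.2‖ < 2 := by
  obtain ⟨h4, h1⟩ := hz
  have hs : 0 < ‖z.2‖ := by linarith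
  calc ‖z.1 * z.2‖ = ‖z.1‖ * ‖z.2‖ := norm_mul _ _
    _ < (1 / ‖z.2‖ + 1 / ‖z.2‖ ^ 3) * ‖z.2‖ :=
      mul_lt_mul_of_pos_right (by linarith [lt_of_abs_lt h1]) hs
    _ = 1 + 1 / ‖z.2‖ ^ 2 := by field_simp
    _ < 2 := by
      have : 1 / ‖z.2‖ ^ 2 < 1 := by rw [div_lt_one (by positivity)]; nlinarith
      linarith

theorem norm_mul_le_sixteen_of_mem_polydiscZ {z : ℂ × ℂ} (hz : z ∈ polydiscZ) :
    ‖z.1 * z.2‖ ≤ 16 := by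
  rw [norm_mul]
  nlinarith [hz.1, hz.2, norm_nonneg z.1, norm_nonneg z.2]

theorem volume_polydiscZ_lt_top : volume polydiscZ < ⊤ :=
  Bornology.IsBounded.measure_lt_top <| (isBounded_closedBall (x := (0 : ℂ × ℂ)) (r := 4)).subset
    fun z hz => by
      rw [mem_closedBall_zero_iff, Prod.norm_def]; exact max_le hz.1 hz.2

theorem ball_subset_support_inter_polydiscZ :
    ball ((2, 2) : ℂ × ℂ) 1 ⊆ (support fun z => ‖z.1 * z.2‖) ∩ polydiscZ := by
  intro z hz
  simp only [mem_ball, Prod.dist_eq, max_lt_iff, Complex.dist_eq] at hz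
  have hnorm : ∀ w : ℂ, ‖w - 2‖ < 1 → 1 < ‖w‖ ∧ ‖w‖ ≤ 4 := fun w hw => by
    have hlow := norm_sub_norm_le (2 : ℂ) w
    have hup := norm_le_norm_add_norm_sub' w 2
    rw [norm_sub_rev, Complex.norm_two] at hlow
    rw [Complex.norm_two] at hup
    constructor <;> linarith
  obtain ⟨h1, h1'⟩ := hnorm _ hz.1
  obtain ⟨h2, h2'⟩ := hnorm _ hz.2
  refine ⟨?_, h1', h2'⟩
  rw [mem_support, norm_mul]
  positivity

-- For `m = 0` the bidisc is empty, since `1 / 0 = 0`.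
theorem tubeX_subset_iUnion :
    tubeX ⊆ ⋃ m : ℕ, ball (0 : ℂ) (4 ^ (m + 1)) ×ˢ ball (0 : ℂ) (1 / (2 * 4 ^ m * m)) := by
  rintro z ⟨h4, h2⟩
  rw [Real.log_div_log] at h2
  set t := ‖z.1‖
  have ht : 0 < t := by linarith
  have hL : 1 < logb 4 t :=
    (logb_self_eq_one (by norm_num)).symm.trans_lt (logb_lt_logb (by norm_num) (by norm_num) h4)
  set m := ⌊logb 4 t⌋₊
  have hm : 1 ≤ m := Nat.le_floor (by exact_mod_cast hL.le)
  have hlow : (4 : ℝ) ^ m ≤ t := by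
    rw [← rpow_natCast, ← le_logb_iff_rpow_le (by norm_num) ht]
    exact Nat.floor_le (by linarith)
  have hup : t < 4 ^ (m + 1) := by
    rw [← rpow_natCast, ← logb_lt_iff_lt_rpow (by norm_num) ht]
    exact_mod_cast Nat.lt_floor_add_one _
  refine Set.mem_iUnion.2 ⟨m, mem_ball_zero_iff.2 hup, mem_ball_zero_iff.2 (h2.trans_le ?_)⟩
  refine one_div_le_one_div_of_le (by positivity) ?_
  gcongr
  exact Nat.floor_le (by linarith)

theorem volume_tubeX_lt_top : volume tubeX < ⊤ := by
  refine measure_lt_top_of_subset_iUnion tubeX_subset_iUnion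
    (fun m => (volume_ball_prod_ball 0 0 (by positivity) (by positivity)).le) ?_
  refine ((summable_one_div_nat_pow.2 one_lt_two).mul_left (4 * π ^ 2)).congr fun m => ?_
  rcases eq_or_ne (m : ℝ) 0 with hm | hm
  · simp [hm]
  · field_simp
    ring

theorem volume_shellY_lt_top : volume shellY < ⊤ := by
  rw [Measure.volume_eq_prod, Measure.prod_apply_symm measurableSet_shellY]
  have hslice : ∀ y : ℂ, volume ((fun x => (x, y)) ⁻¹' shellY) ≤
      ENNReal.ofReal (64 * π) * ENNReal.ofReal ((1 + ‖y‖) ^ (-4 : ℝ)) := by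
    intro y
    by_cases hy : 4 < ‖y‖
    · have hslice_eq :
          (fun x => (x, y)) ⁻¹' shellY = {x : ℂ | |‖x‖ - 1 / ‖y‖| < 1 / ‖y‖ ^ 3} := by
        ext x; simp [shellY, hy]
      have hy0 : 0 < ‖y‖ := by linarith
      rw [hslice_eq, ← ENNReal.ofReal_mul (by positivity)]
      refine (volume_setOf_abs_norm_sub_lt_le (by positivity) ?_).trans
        (ENNReal.ofReal_le_ofReal ?_)
      · gcongr 1 / ?_
        exact le_self_pow₀ (by linarith) (by norm_num)
      · rw [rpow_neg (by positivity), rpow_ofNat, ← div_eq_mul_inv, mul_one_div, mul_one_div,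
          div_div, ← pow_succ', div_le_div_iff₀ (by positivity) (by positivity)]
        calc 4 * π * (1 + ‖y‖) ^ 4 ≤ 4 * π * (2 * ‖y‖) ^ 4 := by gcongr; linarith
          _ = 64 * π * ‖y‖ ^ (3 + 1) := by ring
    · have hslice_eq : (fun x => (x, y)) ⁻¹' shellY = ∅ := by
        ext x; simp [shellY, hy]
      simp [hslice_eq]
  calc ∫⁻ y, volume ((fun x => (x, y)) ⁻¹' shellY)
      ≤ ∫⁻ y : ℂ, ENNReal.ofReal (64 * π) * ENNReal.ofReal ((1 + ‖y‖) ^ (-4 : ℝ)) :=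
        lintegral_mono hslice
    _ = ENNReal.ofReal (64 * π) * ∫⁻ y : ℂ, ENNReal.ofReal ((1 + ‖y‖) ^ (-4 : ℝ)) :=
        lintegral_const_mul' _ _ ENNReal.ofReal_ne_top
    _ < ⊤ := ENNReal.mul_lt_top ENNReal.ofReal_lt_top (finite_integral_one_add_norm (by norm_num))

/-- The series `Σ_{k=1}^∞ (c_{k+1}²/c_k² − c_k²/c_{k−1}²)` converges, where
`c_k² = ∫_Ω |z₁z₂|^{2k} dV`.  (This is the Hilbert–Schmidt condition for the
Hankel operator `H_{conj(z₁)conj(z₂)}` on the Bergman space of `Ω`.) -/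
theorem stmt_13 (X Y Z Ω : Set (ℂ × ℂ))
    (hX : X = {z : ℂ × ℂ | 4 < ‖z.1‖ ∧
      ‖z.2‖ < 1 / (2 * ‖z.1‖ * (Real.log (‖z.1‖) / Real.log 4))})
    (hY : Y = {z : ℂ × ℂ | 4 < ‖z.2‖ ∧
      |‖z.1‖ - 1 / ‖z.2‖| < 1 / (‖z.2‖) ^ 3})
    (hZ : Z = {z : ℂ × ℂ | ‖z.1‖ ≤ 4 ∧ ‖z.2‖ ≤ 4})
    (hΩ : Ω = X ∪ Y ∪ Z)
    (c2 : ℕ → ℝ) (hc2 : ∀ k, c2 k = ∫ z in Ω, ‖z.1 * z.2‖ ^ (2 * k)) :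
    Summable (fun k : ℕ => c2 (k + 2) / c2 (k + 1) - c2 (k + 1) / c2 k) := by
  obtain rfl : X = tubeX := hX
  obtain rfl : Y = shellY := hY
  obtain rfl : Z = polydiscZ := hZ
  subst hΩ
  have hmeas : MeasurableSet (tubeX ∪ shellY ∪ polydiscZ) :=
    (measurableSet_tubeX.union measurableSet_shellY).union measurableSet_polydiscZ
  have : IsFiniteMeasure (volume.restrict (tubeX ∪ shellY ∪ polydiscZ)) :=
    isFiniteMeasure_restrict.2 (measure_union_lt_top (measure_union_lt_top volume_tubeX_lt_top
      volume_shellY_lt_top) volume_polydiscZ_lt_top).ne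
  have hbound : ∀ᵐ z ∂volume.restrict (tubeX ∪ shellY ∪ polydiscZ), |‖z.1 * z.2‖| ≤ 16 := by
    refine ae_restrict_of_forall_mem hmeas fun z hz => ?_
    rw [abs_norm]
    rcases hz with (hz | hz) | hz
    · linarith [norm_mul_lt_one_of_mem_tubeX hz]
    · linarith [norm_mul_lt_two_of_mem_shellY hz]
    · exact norm_mul_le_sixteen_of_mem_polydiscZ hz
  have hsupp : 0 < volume.restrict (tubeX ∪ shellY ∪ polydiscZ) (support fun z => ‖z.1 * z.2‖) :=
    (measure_ball_pos volume _ one_pos).trans_le <| (measure_mono <|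
      ball_subset_support_inter_polydiscZ.trans <| Set.inter_subset_inter_right _
        Set.subset_union_right).trans (Measure.le_restrict_apply _ _)
  simp only [hc2]
  exact summable_ratio_integral_pow_two_mul_sub (by fun_prop) hbound hsupp
end
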